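/- Let a, b, k, m, p be positive real numbers, let n be a natural number, and for each natural number l set c_l = a^{2l} · 2^{k−1} · Γ(k+l) · Γ(m+l, b²/2) / ( l! · Γ(m+l) · (a²+2p)^{k+l} ). Then the truncation error of the series Σ_{l=0}^∞ c_l after n+1 terms satisfies the closed-form bound Σ_{l=n+1}^∞ c_l ≤ Γ(k)/(2 p^k) − Σ_{l=0}^n c_l. -/

import Mathlib

open MeasureTheory Real Filter

/-- Upper incomplete gamma function `Γ(s,x) = ∫_x^∞ t^(s-1) e^(-t) dt`. -/
noncomputable def uGamma (s x : ℝ) : ℝ := ∫ t in Set.Ioi x, t ^ (s - 1) * Real.exp (-t)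

/-- Generalized Marcum Q-function, defined by its canonical series
`Q_m(a,b) = Σ_{l=0}^∞ e^{-a²/2} (a²/2)^l / l! · Γ(m+l, b²/2)/Γ(m+l)`. -/
noncomputable def marcumQ (m a b : ℝ) : ℝ :=
  ∑' l : ℕ, Real.exp (-(a ^ 2) / 2) * (a ^ 2 / 2) ^ l / (Nat.factorial l) *
    (uGamma (m + l) (b ^ 2 / 2) / Real.Gamma (m + l))

/-- Pochhammer symbol `(x)_n = Γ(x+n)/Γ(x)`. -/
noncomputable def poch (x : ℝ) (n : ℕ) : ℝ := Real.Gamma (x + n) / Real.Gamma x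

/-- Kummer confluent hypergeometric function `₁F₁(α,β,z) = Σ_n (α)_n z^n / ((β)_n n!)`. -/
noncomputable def kummer (α β z : ℝ) : ℝ :=
  ∑' n : ℕ, poch α n * z ^ n / (poch β n * Nat.factorial n)

/-- Modified Bessel function of the first kind
`I_ν(z) = Σ_j (z/2)^(ν+2j) / (j! Γ(ν+j+1))`. -/
noncomputable def besselI (ν z : ℝ) : ℝ :=
  ∑' j : ℕ, (z / 2) ^ (ν + 2 * j) / (Nat.factorial j * Real.Gamma (ν + j + 1))

/-! Since `0 ≤ Γ(m+l, b²/2) ≤ Γ(m+l)`, the term `c l` is nonnegative and dominated by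
`d l = 2^(k-1) Γ(k+l) a^(2l) / (l! (a²+2p)^(k+l))`. The negative binomial series
`Σ_l Γ(k+l)/(l! Γ(k)) z^l = (1-z)^(-k)` at `z = a²/(a²+2p)` gives `Σ_l d l = Γ(k)/(2 p^k)`,
so `Σ c` converges and its tail is at most `Γ(k)/(2 p^k)` minus the partial sum. -/

open Finset
open scoped Nat

lemma uGamma_nonneg {s x : ℝ} (hx : 0 ≤ x) : 0 ≤ uGamma s x := by
  refine setIntegral_nonneg measurableSet_Ioi fun t (ht : x < t) => ?_
  have : 0 ≤ t := hx.trans ht.le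
  positivity

lemma uGamma_le_Gamma {s x : ℝ} (hs : 0 < s) (hx : 0 ≤ x) : uGamma s x ≤ Gamma s := by
  have hint : IntegrableOn (fun t : ℝ => t ^ (s - 1) * exp (-t)) (Set.Ioi 0) :=
    (GammaIntegral_convergent hs).congr_fun (fun t _ => mul_comm _ _) measurableSet_Ioi
  rw [Gamma_eq_integral hs, uGamma]
  calc ∫ t in Set.Ioi x, t ^ (s - 1) * exp (-t)
      ≤ ∫ t in Set.Ioi 0, t ^ (s - 1) * exp (-t) := by
        refine setIntegral_mono_set hint ?_ (Set.Ioi_subset_Ioi hx).eventuallyLE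
        filter_upwards [self_mem_ae_restrict measurableSet_Ioi] with t (ht : 0 < t)
        positivity
    _ = ∫ t in Set.Ioi 0, exp (-t) * t ^ (s - 1) :=
        setIntegral_congr_fun measurableSet_Ioi fun t _ => mul_comm _ _

lemma uGamma_div_Gamma_mem_Icc {s x : ℝ} (hs : 0 < s) (hx : 0 ≤ x) :
    uGamma s x / Gamma s ∈ Set.Icc 0 1 :=
  ⟨div_nonneg (uGamma_nonneg hx) (Gamma_pos_of_pos hs).le,
    (div_le_one (Gamma_pos_of_pos hs)).2 (uGamma_le_Gamma hs hx)⟩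

lemma Real.Gamma_add_nat_eq_mul_ascPochhammer {s : ℝ} (hs : 0 < s) (n : ℕ) :
    Gamma (s + n) = Gamma s * (ascPochhammer ℝ n).eval s := by
  induction n with
  | zero => simp
  | succ n ih =>
    rw [Nat.cast_succ, ← add_assoc, Gamma_add_one (by positivity), ih, ascPochhammer_succ_eval]
    ring

lemma Real.multichoose_eq_Gamma_div {s : ℝ} (hs : 0 < s) (n : ℕ) :
    Ring.multichoose s n = Gamma (s + n) / (Gamma s * n !) := by
  have hfac := Ring.factorial_nsmul_multichoose_eq_ascPochhammer s n
  rw [Polynomial.ascPochhammer_smeval_eq_eval, nsmul_eq_mul] at hfac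
  rw [Gamma_add_nat_eq_mul_ascPochhammer hs, ← hfac,
    (Gamma_pos_of_pos hs).ne'.isUnit.mul_div_mul_left, mul_div_cancel_left₀ _ (by positivity)]

lemma Real.hasSum_Gamma_add_div_factorial_mul_pow {s z : ℝ} (hs : 0 < s) (hz : |z| < 1) :
    HasSum (fun n : ℕ => Gamma (s + n) / n ! * z ^ n) (Gamma s / (1 - z) ^ s) := by
  have h := (one_div_one_sub_rpow_hasFPowerSeriesOnBall_zero s).hasSum
    (y := z) (by simpa [enorm_eq_nnnorm, ← NNReal.coe_lt_one] using hz)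
  simp only [FormalMultilinearSeries.ofScalars_apply_eq, smul_eq_mul, zero_add] at h
  have hterm : ∀ n : ℕ,
      Gamma (s + n) / n ! * z ^ n = Gamma s * (Ring.choose (s + n - 1) n * z ^ n) := by
    intro n
    rw [← Ring.multichoose_eq, multichoose_eq_Gamma_div hs]
    field_simp [(Gamma_pos_of_pos hs).ne']
  rw [funext hterm, ← mul_one_div]
  exact h.mul_left _

lemma Real.hasSum_Gamma_add_mul_pow_div_rpow {s x A : ℝ} (hs : 0 < s) (hxA : |x| < A) :
    HasSum (fun n : ℕ => Gamma (s + n) * x ^ n / (n ! * A ^ (s + n)))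
      (Gamma s / (A - x) ^ s) := by
  have hA : 0 < A := (abs_nonneg x).trans_lt hxA
  have hz : |x / A| < 1 := by rwa [abs_div, abs_of_pos hA, div_lt_one hA]
  have hsum := (hasSum_Gamma_add_div_factorial_mul_pow hs hz).div_const (A ^ s)
  have hAx : A - x = (1 - x / A) * A := by field_simp
  have hterm : ∀ n : ℕ, Gamma (s + n) * x ^ n / (n ! * A ^ (s + n)) =
      Gamma (s + n) / n ! * (x / A) ^ n / A ^ s := fun n => by
    rw [rpow_add hA, rpow_natCast, div_pow]
    field_simp
  rw [funext hterm, hAx, mul_rpow (by linarith [(abs_lt.1 hz).2]) hA.le, ← div_div]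
  exact hsum

lemma tsum_nat_add_le_sub_sum_of_le_of_hasSum {c d : ℕ → ℝ} {s : ℝ} (hc : 0 ≤ c)
    (hcd : c ≤ d) (hd : HasSum d s) (n : ℕ) : ∑' l, c (l + n) ≤ s - ∑ l ∈ range n, c l := by
  have hsum : Summable c := hd.summable.of_nonneg_of_le hc hcd
  have hsplit := hsum.sum_add_tsum_nat_add n
  have hle : ∑' l, c l ≤ s := hasSum_le hcd hsum.hasSum hd
  linarith

theorem truncation_error_bound_general (a b k m p : ℝ) (n : ℕ)
    (hk : 0 < k) (hm : 0 < m) (hp : 0 < p)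
    (c : ℕ → ℝ)
    (hc : ∀ l : ℕ, c l =
      a ^ (2 * l) * 2 ^ (k - 1) * Real.Gamma (k + l) * uGamma (m + l) (b ^ 2 / 2) /
        (Nat.factorial l * Real.Gamma (m + l) * (a ^ 2 + 2 * p) ^ (k + l))) :
    (∑' l : ℕ, c (l + n + 1)) ≤
      Real.Gamma k / (2 * p ^ k) - ∑ l ∈ Finset.range (n + 1), c l := by
  set d : ℕ → ℝ := fun l =>
    2 ^ (k - 1) * (Gamma (k + l) * (a ^ 2) ^ l / (l ! * (a ^ 2 + 2 * p) ^ (k + l)))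
  set r : ℕ → ℝ := fun l => uGamma (m + l) (b ^ 2 / 2) / Gamma (m + l)
  have hr : ∀ l, r l ∈ Set.Icc 0 1 := fun l =>
    uGamma_div_Gamma_mem_Icc (by positivity) (by positivity)
  have hcdr : ∀ l, c l = d l * r l := fun l => by
    rw [hc l, pow_mul]
    simp only [d, r]
    field_simp
  have hd : HasSum d (Gamma k / (2 * p ^ k)) := by
    have hsum := (hasSum_Gamma_add_mul_pow_div_rpow hk (x := a ^ 2) (A := a ^ 2 + 2 * p)
      (by rw [abs_of_nonneg (sq_nonneg a)]; linarith)).mul_left (2 ^ (k - 1))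
    have hsum_eq :
        2 ^ (k - 1) * (Gamma k / (a ^ 2 + 2 * p - a ^ 2) ^ k) = Gamma k / (2 * p ^ k) := by
      rw [add_sub_cancel_left, mul_rpow zero_le_two hp.le, rpow_sub_one two_ne_zero]
      field_simp
    rwa [hsum_eq] at hsum
  have hd0 : 0 ≤ d := fun l => by positivity [Gamma_pos_of_pos (by positivity : 0 < k + l)]
  exact tsum_nat_add_le_sub_sum_of_le_of_hasSum
    (fun l => hcdr l ▸ mul_nonneg (hd0 l) (hr l).1)
    (fun l => hcdr l ▸ mul_le_of_le_one_right (hd0 l) (hr l).2) hd (n + 1)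

/-- closed-form upper bound on the truncation error of the series
`Σ c_l` after `n+1` terms: `Σ_{l=n+1}^∞ c_l ≤ Γ(k)/(2 p^k) − Σ_{l=0}^n c_l`. -/
theorem truncation_error_bound (a b k m p : ℝ) (n : ℕ)
    (ha : 0 < a) (hb : 0 < b) (hk : 0 < k) (hm : 0 < m) (hp : 0 < p)
    (c : ℕ → ℝ)
    (hc : ∀ l : ℕ, c l =
      a ^ (2 * l) * 2 ^ (k - 1) * Real.Gamma (k + l) * uGamma (m + l) (b ^ 2 / 2) /
        (Nat.factorial l * Real.Gamma (m + l) * (a ^ 2 + 2 * p) ^ (k + l))) :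
    (∑' l : ℕ, c (l + n + 1)) ≤
      Real.Gamma k / (2 * p ^ k) - ∑ l ∈ Finset.range (n + 1), c l :=
  truncation_error_bound_general a b k m p n hk hm hp c hc
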